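/- Let b : ℝ → ℝ be locally bounded and measurable with liminf_{x→∞} b(x)/log x = ∞. Define u(x) = ∫₀ˣ exp(−∫₀ʸ 2b(z) dz) dy. Then for every c > 0 one has ∫_3^∞ exp(−∫₀ˣ 2b(y) dy) / (u(x) − u(x − c)) dx < ∞. -/

import Mathlib

open Real MeasureTheory intervalIntegral Set Filter Asymptotics

/-!
Write `F x = ∫₀ˣ 2b`, so that `u x - u (x - c) = ∫_{x-c}^x exp (-F)`. Eventually
`b ≥ (2/c) log` on the window `[x - c, x]`, so `F` grows by at least `2 log (x - c)` from any
`y ≤ x - c/2` up to `x`; the half-window `[x - c, x - c/2]` alone then gives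
`u x - u (x - c) ≥ (c/2) (x - c)² exp (-F x)`. The integrand is thus `O(x⁻²)` at infinity, and
being continuous it is integrable on `[3, ∞)`.
-/

theorem locallyIntegrable_of_isCompact_norm_le {X E : Type*} [TopologicalSpace X]
    [MeasurableSpace X] [OpensMeasurableSpace X] [T2Space X]
    [LocallyCompactSpace X] [NormedAddCommGroup E] {μ : Measure X}
    [IsFiniteMeasureOnCompacts μ] {f : X → E} (hf : AEStronglyMeasurable f μ)
    (hbd : ∀ K : Set X, IsCompact K → ∃ M, ∀ x ∈ K, ‖f x‖ ≤ M) : LocallyIntegrable f μ := by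
  refine locallyIntegrable_iff.2 fun K hK => ?_
  obtain ⟨M, hM⟩ := hbd K hK
  exact Measure.integrableOn_of_bounded hK.measure_lt_top.ne hf
    ((ae_restrict_iff' hK.measurableSet).2 (.of_forall hM))

theorem MeasureTheory.LocallyIntegrable.intervalIntegrable {β : ℝ → ℝ}
    (hβ : LocallyIntegrable β volume) (a b : ℝ) :
    IntervalIntegrable β volume a b :=
  (hβ.integrableOn_isCompact isCompact_uIcc).intervalIntegrable

theorem eventually_mul_log_lt_of_liminf_div_log_eq_top {b : ℝ → ℝ}
    (h : liminf (fun x : ℝ => ((b x / log x : ℝ) : EReal)) atTop = ⊤) (K : ℝ) :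
    ∀ᶠ x in atTop, K * log x < b x := by
  have hK : ∀ᶠ x in atTop, ((K : ℝ) : EReal) < ((b x / log x : ℝ) : EReal) :=
    eventually_lt_of_lt_liminf (h ▸ EReal.coe_lt_top K)
  filter_upwards [hK, eventually_gt_atTop 1] with x hx hx1
  exact (lt_div_iff₀ (log_pos hx1)).1 (EReal.coe_lt_coe_iff.1 hx)

theorem mul_sub_le_integral_of_le {β : ℝ → ℝ} {m y x : ℝ} (hyx : y ≤ x)
    (hβ : IntervalIntegrable β volume y x) (hm : ∀ z ∈ Icc y x, m ≤ β z) :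
    m * (x - y) ≤ ∫ z in y..x, β z := by
  simpa [mul_comm] using integral_mono_on hyx intervalIntegrable_const hβ hm

theorem mul_exp_le_integral_exp_neg {F : ℝ → ℝ} (hF : Continuous F) {c m x : ℝ} (hc : 0 < c)
    (hm : 0 ≤ m) (hinc : ∀ y ∈ Icc (x - c) x, F y + m * (x - y) ≤ F x) :
    c / 2 * exp (c / 2 * m - F x) ≤ ∫ y in (x - c)..x, exp (-F y) := by
  have hint : ∀ a a', IntervalIntegrable (fun y => exp (-F y)) volume a a' := fun a a' =>
    (continuous_exp.comp hF.neg).intervalIntegrable a a'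
  have hfirst : ∀ y ∈ Icc (x - c) (x - c / 2), exp (c / 2 * m - F x) ≤ exp (-F y) := by
    intro y ⟨hy₁, hy₂⟩
    have hy := hinc y ⟨hy₁, by linarith⟩
    have hmy : c / 2 * m ≤ m * (x - y) := by nlinarith
    exact exp_le_exp.2 (by linarith)
  calc c / 2 * exp (c / 2 * m - F x)
      ≤ ∫ y in (x - c)..(x - c / 2), exp (-F y) := by
        have := integral_mono_on (by linarith) intervalIntegrable_const (hint _ _) hfirst
        rwa [intervalIntegral.integral_const, smul_eq_mul, sub_sub_sub_cancel_left,
          sub_half] at this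
    _ ≤ (∫ y in (x - c)..(x - c / 2), exp (-F y)) + ∫ y in (x - c / 2)..x, exp (-F y) :=
        le_add_of_nonneg_right (integral_nonneg (by linarith) fun y _ => (exp_pos _).le)
    _ = ∫ y in (x - c)..x, exp (-F y) := integral_add_adjacent_intervals (hint _ _) (hint _ _)

theorem exp_neg_integral_div_integral_le {β : ℝ → ℝ} (hβ : LocallyIntegrable β volume)
    {c m x : ℝ} (hc : 0 < c) (hm : 0 ≤ m) (hβm : ∀ z ∈ Icc (x - c) x, m ≤ β z) :
    exp (-∫ z in 0..x, β z) / ∫ y in (x - c)..x, exp (-∫ z in 0..y, β z) ≤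
      2 / c * exp (-(c / 2 * m)) := by
  have hii := hβ.intervalIntegrable
  have hinc : ∀ y ∈ Icc (x - c) x, (∫ z in 0..y, β z) + m * (x - y) ≤ ∫ z in 0..x, β z := by
    intro y hy
    have := mul_sub_le_integral_of_le hy.2 (hii y x) fun z hz => hβm z ⟨hy.1.trans hz.1, hz.2⟩
    rw [← integral_interval_sub_left (hii 0 x) (hii 0 y)] at this
    linarith
  have hlow := mul_exp_le_integral_exp_neg (continuous_primitive hii 0) hc hm hinc
  rw [div_le_iff₀ ((by positivity : (0 : ℝ) < _).trans_le hlow)]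
  calc exp (-∫ z in 0..x, β z)
      = 2 / c * exp (-(c / 2 * m)) * (c / 2 * exp (c / 2 * m - ∫ z in 0..x, β z)) := by
        rw [mul_mul_mul_comm, ← exp_add]
        field_simp
        ring_nf
    _ ≤ _ := mul_le_mul_of_nonneg_left hlow (by positivity)

theorem sub_rpow_neg_le_two_rpow_mul {x c p : ℝ} (hc : 0 < c) (hx : 2 * c ≤ x) (hp : 0 ≤ p) :
    (x - c) ^ (-p) ≤ 2 ^ p * x ^ (-p) := by
  calc (x - c) ^ (-p) ≤ (x / 2) ^ (-p) :=
        rpow_le_rpow_of_nonpos (by linarith) (by linarith) (by linarith)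
    _ = 2 ^ p * x ^ (-p) := by
      rw [div_rpow (by linarith) zero_le_two, rpow_neg zero_le_two, div_inv_eq_mul, mul_comm]

theorem exp_neg_integral_div_integral_isBigO {β : ℝ → ℝ} (hβ : LocallyIntegrable β volume)
    {c K : ℝ} (hc : 0 < c) (hK : 0 ≤ K) (hlog : ∀ᶠ z in atTop, K * log z ≤ β z) :
    (fun x => exp (-∫ z in 0..x, β z) / ∫ y in (x - c)..x, exp (-∫ z in 0..y, β z))
      =O[atTop] fun x => x ^ (-(c / 2 * K)) := by
  obtain ⟨X, hX⟩ := eventually_atTop.1 hlog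
  refine IsBigO.of_bound (2 / c * 2 ^ (c / 2 * K)) ?_
  filter_upwards [eventually_ge_atTop (max X 1 + c), eventually_ge_atTop (2 * c)] with x hx hx₂
  have hxc : 1 ≤ x - c := by linarith [le_max_right X 1]
  have hβm : ∀ z ∈ Icc (x - c) x, K * log (x - c) ≤ β z := fun z hz =>
    (mul_le_mul_of_nonneg_left (log_le_log (by linarith) hz.1) hK).trans
      (hX z (by linarith [le_max_left X 1, hz.1]))
  have hbound := exp_neg_integral_div_integral_le hβ hc (mul_nonneg hK (log_nonneg hxc)) hβm
  have hden : 0 ≤ ∫ y in (x - c)..x, exp (-∫ z in 0..y, β z) :=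
    integral_nonneg (by linarith) fun y _ => (exp_pos _).le
  rw [norm_of_nonneg (div_nonneg (exp_pos _).le hden),
    norm_of_nonneg (rpow_nonneg (by linarith) _), mul_assoc]
  calc _ ≤ 2 / c * exp (-(c / 2 * (K * log (x - c)))) := hbound
    _ = 2 / c * (x - c) ^ (-(c / 2 * K)) := by
      rw [rpow_def_of_pos (by linarith)]
      ring_nf
    _ ≤ _ := mul_le_mul_of_nonneg_left
      (sub_rpow_neg_le_two_rpow_mul hc hx₂ (by positivity)) (by positivity)

/-- Theorem 2(iii), analytic content: if `liminf_{x→∞} b(x)/log x = ∞`, then the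
down-crossing criterion integral is finite for every `c > 0`. -/
theorem criterion_finite_of_superlog_drift
    (b : ℝ → ℝ) (hb_meas : Measurable b)
    (hb_loc : ∀ K : Set ℝ, IsCompact K → ∃ M, ∀ x ∈ K, |b x| ≤ M)
    (hliminf : liminf (fun x : ℝ => ((b x / Real.log x : ℝ) : EReal)) atTop = ⊤)
    (u : ℝ → ℝ)
    (hu : ∀ x, u x = ∫ y in (0:ℝ)..x, Real.exp (-∫ z in (0:ℝ)..y, 2 * b z)) :
    ∀ c : ℝ, 0 < c →
      IntegrableOn
        (fun x => Real.exp (-∫ y in (0:ℝ)..x, 2 * b y) / (u x - u (x - c)))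
        (Ici (3:ℝ)) := by
  intro c hc
  have hβ : LocallyIntegrable (fun z => 2 * b z) volume :=
    (locallyIntegrable_of_isCompact_norm_le hb_meas.aestronglyMeasurable hb_loc).smul (2 : ℝ)
  have hg : Continuous fun y => exp (-∫ z in (0:ℝ)..y, 2 * b z) :=
    continuous_exp.comp (continuous_primitive hβ.intervalIntegrable 0).neg
  have hu_cont : Continuous u := by
    rw [funext hu]
    exact continuous_primitive (hg.intervalIntegrable ·) 0
  have hdiff : ∀ x, u x - u (x - c) = ∫ y in (x - c)..x, exp (-∫ z in (0:ℝ)..y, 2 * b z) :=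
    fun x => by
      rw [hu, hu]
      exact integral_interval_sub_left (hg.intervalIntegrable _ _) (hg.intervalIntegrable _ _)
  have hden : ∀ x, u x - u (x - c) ≠ 0 := fun x =>
    (hdiff x ▸ intervalIntegral_pos_of_pos (hg.intervalIntegrable _ _) (fun _ => exp_pos _)
      (by linarith)).ne'
  have hlog : ∀ᶠ z in atTop, 4 / c * log z ≤ 2 * b z := by
    filter_upwards [eventually_mul_log_lt_of_liminf_div_log_eq_top hliminf (2 / c)] with z hz
    linarith [show 4 / c * log z = 2 * (2 / c * log z) by ring]
  have hexp : -(c / 2 * (4 / c)) < -1 := by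
    field_simp
    norm_num
  have hf : Continuous fun x => exp (-∫ y in (0:ℝ)..x, 2 * b y) / (u x - u (x - c)) :=
    hg.div (hu_cont.sub (hu_cont.comp (continuous_sub_right c))) hden
  refine (hf.locallyIntegrable.locallyIntegrableOn _).integrableOn_of_isBigO_atTop ?_
    (integrableAtFilter_rpow_atTop_iff.2 hexp)
  simp only [hdiff]
  exact exp_neg_integral_div_integral_isBigO hβ hc (by positivity) hlog
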